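/- Every matroid complex Δ is Cohen–Macaulay over every field; moreover Δ is the join of a simplex and a 2-CM complex, and Δ is either a cone (i.e., there is a vertex contained in every maximal face) or has nonvanishing top reduced homology H̃_{dim Δ}(Δ;k)≠0. -/
import Mathlib


open scoped Classical

namespace MultConj

variable {n : ℕ}

/-- `K` is (the set of faces of) an abstract simplicial complex on the
vertex set `Fin n`: it contains the empty face and is closed under subsets. -/
def IsComplex (K : Finset (Finset (Fin n))) : Prop :=
  ∅ ∈ K ∧ ∀ F ∈ K, ∀ G ⊆ F, G ∈ K

/-- The induced subcomplex `Δ_W` on a vertex set `W`. -/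
def induced (K : Finset (Finset (Fin n))) (W : Finset (Fin n)) :
    Finset (Finset (Fin n)) :=
  K.filter fun F => F ⊆ W

/-- The link of a face `F`. -/
def link (K : Finset (Finset (Fin n))) (F : Finset (Fin n)) :
    Finset (Finset (Fin n)) :=
  K.filter fun G => F ∩ G = ∅ ∧ F ∪ G ∈ K

/-- The `i`-skeleton: all faces of dimension at most `i`,
i.e. with at most `i+1` vertices. -/
def skel (K : Finset (Finset (Fin n))) (i : ℕ) : Finset (Finset (Fin n)) :=
  K.filter fun F => F.card ≤ i + 1

/-- The number of faces with `j` vertices, i.e. `f_{j-1}(K)`. -/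
def fcount (K : Finset (Finset (Fin n))) (j : ℕ) : ℕ :=
  (K.filter fun F => F.card = j).card

/-- The dimension of `K`, as an integer. -/
noncomputable def dimOf (K : Finset (Finset (Fin n))) : ℤ :=
  ((K.sup fun F => F.card : ℕ) : ℤ) - 1

variable (k : Type) [Field k]

/-- Simplicial chains supported on the faces of `K` having `j` vertices
(that is, `(j-1)`-dimensional chains), with coefficients in `k`. -/
abbrev chain (K : Finset (Finset (Fin n))) (j : ℕ) : Type :=
  {F : Finset (Fin n) // F ∈ K ∧ F.card = j} → k

/-- The simplicial boundary operator (with the standard orientation coming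
from the linear order on the vertices), viewed as landing in the space of
all functions on finsets. -/
noncomputable def bdry (K : Finset (Finset (Fin n))) (j : ℕ)
    (c : chain k K j) : Finset (Fin n) → k :=
  fun G => ∑ v : Fin n,
    if h : v ∉ G ∧ insert v G ∈ K ∧ (insert v G).card = j then
      (-1 : k) ^ (G.filter fun w => w < v).card * c ⟨insert v G, h.2⟩
    else 0

/-- Extension of a chain by zero to a function on all finsets. -/
def ext (K : Finset (Finset (Fin n))) (j : ℕ) (c : chain k K j) :
    Finset (Fin n) → k :=
  fun F => if h : F ∈ K ∧ F.card = j then c ⟨F, h⟩ else 0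

/-- `H̃_p(K; k) ≠ 0`: there is a reduced `p`-cycle which is not a boundary.
(For `p ≤ -2` this is false, as there is no `j : ℕ` with `j = p + 1`.) -/
def homNonzero (K : Finset (Finset (Fin n))) (p : ℤ) : Prop :=
  ∃ j : ℕ, (j : ℤ) = p + 1 ∧
    ∃ c : chain k K j, bdry k K j c = 0 ∧
      ∀ b : chain k K (j + 1), bdry k K (j + 1) b ≠ ext k K j c

/-- `H̃_p(K; k) ≅ k`: there is a reduced `p`-cycle `z` which is not a
boundary, and modulo boundaries every `p`-cycle is a multiple of `z`. -/
def homIsK (K : Finset (Finset (Fin n))) (p : ℤ) : Prop :=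
  ∃ j : ℕ, (j : ℤ) = p + 1 ∧
    ∃ z : chain k K j, bdry k K j z = 0 ∧
      (∀ b : chain k K (j + 1), bdry k K (j + 1) b ≠ ext k K j z) ∧
      ∀ c : chain k K j, bdry k K j c = 0 →
        ∃ a : k, ∃ b : chain k K (j + 1),
          bdry k K (j + 1) b = ext k K j (c - a • z)

/-- Cohen–Macaulayness of `K` over `k`, via Reisner's criterion:
`H̃_i(lk F; k) = 0` for every face `F` and every `i < dim K - |F|`. -/
def IsCM (K : Finset (Finset (Fin n))) : Prop :=
  ∀ F ∈ K, ∀ i : ℤ, i < dimOf K - F.card → ¬ homNonzero k (link K F) i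

/-- `K` is `q`-Cohen–Macaulay over `k`: removing any at most `q - 1`
vertices leaves a Cohen–Macaulay complex of the same dimension. -/
def IsQCM (q : ℕ) (K : Finset (Finset (Fin n))) : Prop :=
  ∀ U : Finset (Fin n), U.card ≤ q - 1 →
    IsCM k (induced K Uᶜ) ∧ dimOf (induced K Uᶜ) = dimOf K

/-- `q(K)`: the largest `q` for which `K` is `q`-CM over `k`. -/
noncomputable def qConn (K : Finset (Finset (Fin n))) : ℕ :=
  sSup {q : ℕ | IsQCM k q K}

/-- The CM-connectivity sequence: `q_i = q(Skel_i K)`. -/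
noncomputable def qSeq (K : Finset (Finset (Fin n))) (i : ℕ) : ℕ :=
  qConn k (skel K i)

/-- The minimal shifts `m_i` in the minimal free resolution of the face ring,
via Hochster's formula. -/
noncomputable def mshift (K : Finset (Finset (Fin n))) (i : ℕ) : ℕ :=
  sInf {m : ℕ | ∃ W : Finset (Fin n), W.card = m ∧
    homNonzero k (induced K W) ((W.card : ℤ) - i - 1)}

/-- The maximal shifts `M_i` in the minimal free resolution of the face ring,
via Hochster's formula. -/
noncomputable def Mshift (K : Finset (Finset (Fin n))) (i : ℕ) : ℕ :=
  sSup {m : ℕ | ∃ W : Finset (Fin n), W.card = m ∧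
    homNonzero k (induced K W) ((W.card : ℤ) - i - 1)}

/-- `K` is pure: every maximal face has cardinality `dim K + 1`. -/
def IsPure (K : Finset (Finset (Fin n))) : Prop :=
  ∀ F ∈ K, (∀ G ∈ K, F ⊆ G → G = F) → (F.card : ℤ) = dimOf K + 1

/-- `K` is connected: any two vertices are joined by a path of edges. -/
def Connected (K : Finset (Finset (Fin n))) : Prop :=
  ∀ u v : Fin n, {u} ∈ K → {v} ∈ K →
    Relation.ReflTransGen (fun a b => ({a, b} : Finset (Fin n)) ∈ K) u v

/-- `K` is Gorenstein* over `k`; by Stanley's topological characterization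
this means that `K` is a `k`-homology sphere: for every face `F` the link of
`F` has vanishing reduced homology below dimension `dim K - |F|` and reduced
homology isomorphic to `k` in dimension `dim K - |F|`. -/
def IsGorensteinStar (K : Finset (Finset (Fin n))) : Prop :=
  IsComplex K ∧
  (∀ F ∈ K, ∀ i : ℤ, i < dimOf K - F.card → ¬ homNonzero k (link K F) i) ∧
  (∀ F ∈ K, homIsK k (link K F) (dimOf K - F.card))


/-! ### Auxiliary machinery -/

section Aux

variable {n : ℕ}

/-- The augmentation (exchange) property of a matroid complex. -/
def Aug (K : Finset (Finset (Fin n))) : Prop :=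
  ∀ I ∈ K, ∀ J ∈ K, I.card < J.card → ∃ x, x ∈ J ∧ x ∉ I ∧ insert x I ∈ K

lemma mem_link {K : Finset (Finset (Fin n))} {F G : Finset (Fin n)} :
    G ∈ link K F ↔ G ∈ K ∧ F ∩ G = ∅ ∧ F ∪ G ∈ K := by
  simp [link, Finset.mem_filter, and_assoc]

lemma mem_induced {K : Finset (Finset (Fin n))} {W F : Finset (Fin n)} :
    F ∈ induced K W ↔ F ∈ K ∧ F ⊆ W := by
  simp [induced, Finset.mem_filter]

lemma mem_linkv {K : Finset (Finset (Fin n))} {v : Fin n} {G : Finset (Fin n)} :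
    G ∈ link K {v} ↔ G ∈ K ∧ v ∉ G ∧ insert v G ∈ K := by
  rw [mem_link]
  constructor
  · rintro ⟨h1, h2, h3⟩
    refine ⟨h1, ?_, ?_⟩
    · intro hv
      have : v ∈ ({v} : Finset (Fin n)) ∩ G := by simp [hv]
      rw [h2] at this; exact absurd this (by simp)
    · rwa [Finset.insert_eq]
  · rintro ⟨h1, h2, h3⟩
    refine ⟨h1, ?_, ?_⟩
    · ext x
      simp only [Finset.mem_inter, Finset.mem_singleton, Finset.notMem_empty, iff_false,
        not_and]
      rintro rfl; exact h2
    · rwa [← Finset.insert_eq]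

lemma isComplex_link {K : Finset (Finset (Fin n))} (hK : IsComplex K)
    {F : Finset (Fin n)} (hF : F ∈ K) : IsComplex (link K F) := by
  constructor
  · exact mem_link.2 ⟨hK.1, by simp, by simpa using hF⟩
  · intro G hG H hH
    obtain ⟨h1, h2, h3⟩ := mem_link.1 hG
    refine mem_link.2 ⟨hK.2 G h1 H hH, ?_, hK.2 _ h3 _ (Finset.union_subset_union_right hH)⟩
    apply Finset.eq_empty_of_forall_notMem
    intro x hx
    have : x ∈ F ∩ G := Finset.mem_inter.2 ⟨(Finset.mem_inter.1 hx).1, hH (Finset.mem_inter.1 hx).2⟩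
    rw [h2] at this; simp at this

lemma isComplex_induced {K : Finset (Finset (Fin n))} (hK : IsComplex K)
    (W : Finset (Fin n)) : IsComplex (induced K W) := by
  constructor
  · exact mem_induced.2 ⟨hK.1, by simp⟩
  · intro G hG H hH
    obtain ⟨h1, h2⟩ := mem_induced.1 hG
    exact mem_induced.2 ⟨hK.2 G h1 H hH, hH.trans h2⟩

lemma aug_induced {K : Finset (Finset (Fin n))} (hA : Aug K) (W : Finset (Fin n)) :
    Aug (induced K W) := by
  intro I hI J hJ hc
  obtain ⟨hI1, hI2⟩ := mem_induced.1 hI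
  obtain ⟨hJ1, hJ2⟩ := mem_induced.1 hJ
  obtain ⟨x, hxJ, hxI, hx⟩ := hA I hI1 J hJ1 hc
  exact ⟨x, hxJ, hxI, mem_induced.2 ⟨hx, Finset.insert_subset (hJ2 hxJ) hI2⟩⟩

lemma aug_link {K : Finset (Finset (Fin n))} (hK : IsComplex K) (hA : Aug K)
    (F : Finset (Fin n)) : Aug (link K F) := by
  intro I hI J hJ hc
  obtain ⟨hI1, hI2, hI3⟩ := mem_link.1 hI
  obtain ⟨hJ1, hJ2, hJ3⟩ := mem_link.1 hJ
  have hdI : Disjoint F I := Finset.disjoint_iff_inter_eq_empty.2 hI2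
  have hdJ : Disjoint F J := Finset.disjoint_iff_inter_eq_empty.2 hJ2
  have hcard : (F ∪ I).card < (F ∪ J).card := by
    rw [Finset.card_union_of_disjoint hdI, Finset.card_union_of_disjoint hdJ]
    omega
  obtain ⟨x, hxJ, hxI, hx⟩ := hA (F ∪ I) hI3 (F ∪ J) hJ3 hcard
  have hxF : x ∉ F := fun h => hxI (Finset.mem_union_left _ h)
  have hxJ' : x ∈ J := by
    rcases Finset.mem_union.1 hxJ with h | h
    · exact absurd h hxF
    · exact h
  have hxI' : x ∉ I := fun h => hxI (Finset.mem_union_right _ h)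
  refine ⟨x, hxJ', hxI', mem_link.2 ⟨?_, ?_, ?_⟩⟩
  · exact hK.2 _ hx (insert x I) (by
      intro y hy
      rcases Finset.mem_insert.1 hy with rfl | hy
      · exact Finset.mem_insert_self _ _
      · exact Finset.mem_insert_of_mem (Finset.mem_union_right _ hy))
  · apply Finset.eq_empty_of_forall_notMem
    intro y hy
    obtain ⟨hyF, hyI⟩ := Finset.mem_inter.1 hy
    rcases Finset.mem_insert.1 hyI with rfl | hy'
    · exact hxF hyF
    · exact (Finset.disjoint_left.1 hdI hyF) hy' 
  · have : F ∪ insert x I = insert x (F ∪ I) := by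
      ext y; simp only [Finset.mem_union, Finset.mem_insert]; tauto
    rwa [this]

/-- Every matroid complex has the augmentation property. -/
lemma aug_of_matroid {K : Finset (Finset (Fin n))} (hK : IsComplex K)
    (hmat : ∀ W : Finset (Fin n), IsPure (induced K W)) : Aug K := by
  intro I hI J hJ hc
  have hIΔ : I ∈ induced K (I ∪ J) := mem_induced.2 ⟨hI, Finset.subset_union_left⟩
  have hJΔ : J ∈ induced K (I ∪ J) := mem_induced.2 ⟨hJ, Finset.subset_union_right⟩
  classical
  have hSne : ((induced K (I ∪ J)).filter (fun G => I ⊆ G)).Nonempty :=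
    ⟨I, Finset.mem_filter.2 ⟨hIΔ, Finset.Subset.refl I⟩⟩
  obtain ⟨M, hMS, hMsup⟩ := Finset.exists_mem_eq_sup _ hSne (fun G => G.card)
  have hMΔ : M ∈ induced K (I ∪ J) := (Finset.mem_filter.1 hMS).1
  have hIM : I ⊆ M := (Finset.mem_filter.1 hMS).2
  have hMmax : ∀ G ∈ induced K (I ∪ J), M ⊆ G → G = M := by
    intro G hG hMG
    have hGS : G ∈ (induced K (I ∪ J)).filter (fun G => I ⊆ G) :=
      Finset.mem_filter.2 ⟨hG, hIM.trans hMG⟩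
    have hle : G.card ≤ M.card := by
      rw [← hMsup]; exact Finset.le_sup (f := fun G => G.card) hGS
    exact (Finset.eq_of_subset_of_card_le hMG hle).symm
  have hpure := hmat (I ∪ J) M hMΔ hMmax
  have hJle : (J.card : ℤ) ≤ dimOf (induced K (I ∪ J)) + 1 := by
    rw [dimOf]
    have : J.card ≤ (induced K (I ∪ J)).sup (fun F => F.card) :=
      Finset.le_sup (f := fun F => F.card) hJΔ
    omega
  have hcard : I.card < M.card := by
    have : (I.card : ℤ) < (M.card : ℤ) := by rw [hpure]; omega
    exact_mod_cast this
  have hss : I ⊂ M := Finset.ssubset_iff_subset_ne.2 ⟨hIM, by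
    intro h; rw [h] at hcard; omega⟩
  obtain ⟨x, hxM, hxI⟩ := Finset.exists_of_ssubset hss
  have hxW : x ∈ I ∪ J := (mem_induced.1 hMΔ).2 hxM
  have hxJ : x ∈ J := by
    rcases Finset.mem_union.1 hxW with h | h
    · exact absurd h hxI
    · exact h
  refine ⟨x, hxJ, hxI, ?_⟩
  exact hK.2 M (mem_induced.1 hMΔ).1 _ (Finset.insert_subset hxM hIM)

end Aux


section Chains

variable {n : ℕ} (k : Type) [Field k]

lemma ext_eq {K : Finset (Finset (Fin n))} {j : ℕ} (c : chain k K j) {F : Finset (Fin n)}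
    (h : F ∈ K ∧ F.card = j) : ext k K j c F = c ⟨F, h⟩ := dif_pos h

lemma ext_eq_zero {K : Finset (Finset (Fin n))} {j : ℕ} (c : chain k K j) {F : Finset (Fin n)}
    (h : ¬(F ∈ K ∧ F.card = j)) : ext k K j c F = 0 := dif_neg h

/-- The boundary operator written through `ext`. -/
lemma bdry_eq (K : Finset (Finset (Fin n))) (j : ℕ) (c : chain k K j) (G : Finset (Fin n)) :
    bdry k K j c G = ∑ v : Fin n, if v ∉ G then
      (-1 : k) ^ (G.filter fun w => w < v).card * ext k K j c (insert v G) else 0 := by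
  rw [bdry]
  refine Finset.sum_congr rfl fun v _ => ?_
  by_cases h1 : v ∉ G
  · by_cases h2 : insert v G ∈ K ∧ (insert v G).card = j
    · rw [dif_pos ⟨h1, h2⟩, if_pos h1, ext_eq k c h2]
    · rw [dif_neg (by tauto), if_pos h1, ext_eq_zero k c h2, mul_zero]
  · rw [dif_neg (by tauto), if_neg h1]

/-- The boundary depends only on the extension-by-zero of the chain. -/
lemma bdry_ext_congr {K₁ K₂ : Finset (Finset (Fin n))} {j : ℕ}
    {c₁ : chain k K₁ j} {c₂ : chain k K₂ j}
    (h : ext k K₁ j c₁ = ext k K₂ j c₂) : bdry k K₁ j c₁ = bdry k K₂ j c₂ := by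
  funext G
  rw [bdry_eq, bdry_eq, h]

lemma ext_lift {K D : Finset (Finset (Fin n))} (hDK : ∀ F ∈ D, F ∈ K) {j : ℕ}
    (w : chain k D j) :
    ext k K j (fun F => ext k D j w F.1) = ext k D j w := by
  funext H
  by_cases h : H ∈ K ∧ H.card = j
  · rw [ext_eq k _ h]
  · rw [ext_eq_zero k _ h]
    by_cases h2 : H ∈ D ∧ H.card = j
    · exact absurd ⟨hDK H h2.1, h2.2⟩ h
    · rw [ext_eq_zero k _ h2]

lemma bdry_add {K : Finset (Finset (Fin n))} {j : ℕ} (c c' : chain k K j)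
    (G : Finset (Fin n)) :
    bdry k K j (fun F => c F + c' F) G = bdry k K j c G + bdry k K j c' G := by
  rw [bdry_eq, bdry_eq, bdry_eq, ← Finset.sum_add_distrib]
  refine Finset.sum_congr rfl fun v _ => ?_
  by_cases h1 : v ∉ G
  · rw [if_pos h1, if_pos h1, if_pos h1, ← mul_add]
    congr 1
    by_cases h2 : insert v G ∈ K ∧ (insert v G).card = j
    · rw [ext_eq k _ h2, ext_eq k _ h2, ext_eq k _ h2]
    · rw [ext_eq_zero k _ h2, ext_eq_zero k _ h2, ext_eq_zero k _ h2, add_zero]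
  · rw [if_neg h1, if_neg h1, if_neg h1, add_zero]

lemma bdry_sub {K : Finset (Finset (Fin n))} {j : ℕ} (c c' : chain k K j)
    (G : Finset (Fin n)) :
    bdry k K j (fun F => c F - c' F) G = bdry k K j c G - bdry k K j c' G := by
  rw [bdry_eq, bdry_eq, bdry_eq, ← Finset.sum_sub_distrib]
  refine Finset.sum_congr rfl fun v _ => ?_
  by_cases h1 : v ∉ G
  · rw [if_pos h1, if_pos h1, if_pos h1, ← mul_sub]
    congr 1
    by_cases h2 : insert v G ∈ K ∧ (insert v G).card = j
    · rw [ext_eq k _ h2, ext_eq k _ h2, ext_eq k _ h2]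
    · rw [ext_eq_zero k _ h2, ext_eq_zero k _ h2, ext_eq_zero k _ h2, sub_zero]
  · rw [if_neg h1, if_neg h1, if_neg h1, sub_zero]

lemma bdry_eq_zero_of {K : Finset (Finset (Fin n))} (hK : IsComplex K) {j : ℕ}
    (c : chain k K j) (G : Finset (Fin n)) (h : ¬(G ∈ K ∧ G.card + 1 = j)) :
    bdry k K j c G = 0 := by
  rw [bdry_eq]
  refine Finset.sum_eq_zero fun v _ => ?_
  by_cases h1 : v ∉ G
  · rw [if_pos h1]
    have h2 : ¬(insert v G ∈ K ∧ (insert v G).card = j) := by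
      rintro ⟨hm, hcard⟩
      exact h ⟨hK.2 _ hm G (Finset.subset_insert v G), by
        rwa [Finset.card_insert_of_notMem h1] at hcard⟩
    rw [ext_eq_zero k _ h2, mul_zero]
  · rw [if_neg h1]

lemma bdry_top_zero {K : Finset (Finset (Fin n))}
    (b : chain k K (K.sup (fun F => F.card) + 1)) :
    bdry k K (K.sup (fun F => F.card) + 1) b = 0 := by
  funext G
  rw [bdry_eq]
  refine Finset.sum_eq_zero fun v _ => ?_
  by_cases h1 : v ∉ G
  · rw [if_pos h1]
    have h2 : ¬(insert v G ∈ K ∧ (insert v G).card = K.sup (fun F => F.card) + 1) := by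
      rintro ⟨hm, hcard⟩
      have h3 : (insert v G).card ≤ K.sup (fun F => F.card) :=
        Finset.le_sup (f := fun F : Finset (Fin n) => F.card) hm
      omega
    rw [ext_eq_zero k _ h2, mul_zero]
  · rw [if_neg h1]

lemma sq_sign (m : ℕ) (x : k) : (-1 : k) ^ m * ((-1 : k) ^ m * x) = x := by
  rw [← mul_assoc, ← mul_pow]
  norm_num

end Chains


section Cone

variable {n : ℕ} (k : Type) [Field k]

lemma filter_insert_card {u : Fin n} {G : Finset (Fin n)} (hu : u ∉ G) (v : Fin n) :
    ((insert u G).filter fun w => w < v).card =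
      (G.filter fun w => w < v).card + if u < v then 1 else 0 := by
  rw [Finset.filter_insert]
  by_cases h : u < v
  · rw [if_pos h, if_pos h, Finset.card_insert_of_notMem (fun hm => hu (Finset.mem_filter.1 hm).1)]
  · rw [if_neg h, if_neg h, add_zero]

lemma filter_erase_card {v : Fin n} {G : Finset (Fin n)} (hv : v ∈ G) (u : Fin n) :
    (G.filter fun w => w < u).card =
      ((G.erase v).filter fun w => w < u).card + if v < u then 1 else 0 := by
  rw [Finset.filter_erase]
  by_cases h : v < u
  · have hm : v ∈ G.filter fun w => w < u := Finset.mem_filter.2 ⟨hv, h⟩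
    have hpos : 0 < (G.filter fun w => w < u).card := Finset.card_pos.2 ⟨v, hm⟩
    rw [if_pos h, Finset.card_erase_of_mem hm]
    omega
  · rw [if_neg h, add_zero]
    congr 1
    exact (Finset.erase_eq_of_notMem (a := v) (s := G.filter fun w => w < u)
      (fun hm => h (Finset.mem_filter.1 hm).2)).symm

lemma filter_self_erase {v : Fin n} (G : Finset (Fin n)) :
    ((G.erase v).filter fun w => w < v) = G.filter fun w => w < v := by
  rw [Finset.filter_erase]
  exact Finset.erase_eq_of_notMem (a := v) (s := G.filter fun w => w < v)
    (fun hm => lt_irrefl v (Finset.mem_filter.1 hm).2)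

/-- The cone (join with the vertex `v`) of a chain on `link K {v}`. -/
noncomputable def coneCh (K : Finset (Finset (Fin n))) (v : Fin n) (j : ℕ)
    (γ : chain k (link K {v}) j) : chain k K (j+1) :=
  fun F => if v ∈ F.1 then
    (-1 : k) ^ (F.1.filter fun w => w < v).card * ext k (link K {v}) j γ (F.1.erase v)
  else 0

lemma ext_link_zero {K : Finset (Finset (Fin n))} {v : Fin n} {j : ℕ}
    (γ : chain k (link K {v}) j) {H : Finset (Fin n)} (hv : v ∈ H) :
    ext k (link K {v}) j γ H = 0 := by
  refine ext_eq_zero k _ ?_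
  rintro ⟨hm, -⟩
  exact (mem_linkv.1 hm).2.1 hv

lemma ext_coneCh (K : Finset (Finset (Fin n))) (v : Fin n) (j : ℕ)
    (γ : chain k (link K {v}) j) (F : Finset (Fin n)) :
    ext k K (j+1) (coneCh k K v j γ) F =
      if v ∈ F ∧ F ∈ K ∧ F.card = j+1 then
        (-1 : k) ^ (F.filter fun w => w < v).card * ext k (link K {v}) j γ (F.erase v)
      else 0 := by
  by_cases h : F ∈ K ∧ F.card = j+1
  · rw [ext_eq k _ h]
    by_cases hv : v ∈ F
    · rw [if_pos ⟨hv, h⟩]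
      exact if_pos hv
    · rw [if_neg (fun hh => hv hh.1)]
      exact if_neg hv
  · rw [ext_eq_zero k _ h, if_neg (fun hh => h hh.2)]

/-- Identity I: the boundary of a cone. -/
lemma bdry_coneCh {K : Finset (Finset (Fin n))} (hK : IsComplex K) (v : Fin n) (j : ℕ)
    (γ : chain k (link K {v}) j) (G : Finset (Fin n)) :
    bdry k K (j+1) (coneCh k K v j γ) G =
      if v ∈ G then
        -((-1 : k) ^ (G.filter fun w => w < v).card) *
          bdry k (link K {v}) j γ (G.erase v)
      else ext k (link K {v}) j γ G := by
  rw [bdry_eq]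
  by_cases hv : v ∈ G
  · rw [if_pos hv, bdry_eq, Finset.mul_sum]
    refine Finset.sum_congr rfl fun u _ => ?_
    by_cases huv : u = v
    · subst huv
      rw [if_neg (fun h => h hv), if_pos (Finset.notMem_erase u G),
        ext_link_zero k γ (Finset.mem_insert_self u _), mul_zero, mul_zero]
    · by_cases huG : u ∈ G
      · rw [if_neg (fun h => h huG), if_neg (fun h => h (Finset.mem_erase.2 ⟨huv, huG⟩)), mul_zero]
      · rw [if_pos huG, if_pos (fun h => huG (Finset.mem_of_mem_erase h)), ext_coneCh,
          Finset.erase_insert_of_ne huv]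
        by_cases hP : insert u G ∈ K ∧ (insert u G).card = j + 1
        · rw [if_pos ⟨Finset.mem_insert_of_mem hv, hP⟩]
          rw [filter_insert_card huG v, filter_erase_card hv u]
          rcases lt_or_gt_of_ne huv with h | h
          · rw [if_pos h, if_neg (asymm h)]
            simp [pow_succ]
            ring
          · rw [if_neg (asymm h), if_pos h]
            simp [pow_succ]
            ring
        · rw [if_neg (fun hh => hP hh.2)]
          have hz : ext k (link K {v}) j γ (insert u (G.erase v)) = 0 := by
            refine ext_eq_zero k _ ?_
            rintro ⟨hm, hcard⟩
            obtain ⟨hm1, hm2, hm3⟩ := mem_linkv.1 hm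
            have he : insert v (insert u (G.erase v)) = insert u G := by
              rw [Finset.insert_comm, Finset.insert_erase hv]
            refine hP ⟨by rwa [he] at hm3, ?_⟩
            have : (insert v (insert u (G.erase v))).card = j + 1 := by
              rw [Finset.card_insert_of_notMem hm2, hcard]
            rwa [he] at this
          rw [hz, mul_zero, mul_zero, mul_zero]
  · rw [if_neg hv]
    rw [Fintype.sum_eq_single v ?_]
    · rw [if_pos hv, ext_coneCh]
      by_cases hP : insert v G ∈ K ∧ (insert v G).card = j + 1
      · rw [if_pos ⟨Finset.mem_insert_self v G, hP⟩, Finset.erase_insert hv,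
          Finset.filter_insert, if_neg (lt_irrefl v), sq_sign]
      · rw [if_neg (fun hh => hP hh.2), mul_zero]
        refine (ext_eq_zero k _ ?_).symm
        rintro ⟨hm, hcard⟩
        obtain ⟨hm1, hm2, hm3⟩ := mem_linkv.1 hm
        exact hP ⟨hm3, by rw [Finset.card_insert_of_notMem hv, hcard]⟩
    · intro u hu
      by_cases huG : u ∉ G
      · rw [if_pos huG, ext_coneCh,
          if_neg (fun hh => hv (by
            rcases Finset.mem_insert.1 hh.1 with h | h
            · exact absurd h.symm hu
            · exact h)), mul_zero]
      · rw [if_neg huG]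

/-- The `v`-part of a chain, as a chain on the link of `v`. -/
noncomputable def downCh (K : Finset (Finset (Fin n))) (v : Fin n) (j : ℕ)
    (c : chain k K (j+1)) : chain k (link K {v}) j :=
  fun G => (-1 : k) ^ (G.1.filter fun w => w < v).card * ext k K (j+1) c (insert v G.1)

lemma ext_downCh {K : Finset (Finset (Fin n))} (hK : IsComplex K) (v : Fin n) (j : ℕ)
    (c : chain k K (j+1)) {F : Finset (Fin n)} (hv : v ∈ F) :
    ext k (link K {v}) j (downCh k K v j c) (F.erase v) =
      (-1 : k) ^ (F.filter fun w => w < v).card * ext k K (j+1) c F := by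
  by_cases hF : F ∈ K ∧ F.card = j + 1
  · have hgate : F.erase v ∈ link K {v} ∧ (F.erase v).card = j := by
      have h1 : F.erase v ∈ K := hK.2 F hF.1 (F.erase v) (Finset.erase_subset v F)
      have h2 : insert v (F.erase v) ∈ K := by rw [Finset.insert_erase hv]; exact hF.1
      refine ⟨mem_linkv.2 ⟨h1, Finset.notMem_erase v F, h2⟩, ?_⟩
      rw [Finset.card_erase_of_mem hv, hF.2]
      omega
    rw [ext_eq k _ hgate]
    show (-1 : k) ^ ((F.erase v).filter fun w => w < v).card *
      ext k K (j+1) c (insert v (F.erase v)) = _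
    rw [Finset.insert_erase hv, filter_self_erase]
  · rw [ext_eq_zero k c hF, mul_zero]
    refine ext_eq_zero k _ ?_
    rintro ⟨hm, hcard⟩
    obtain ⟨hm1, hm2, hm3⟩ := mem_linkv.1 hm
    rw [Finset.insert_erase hv] at hm3
    refine hF ⟨hm3, ?_⟩
    have := Finset.card_erase_of_mem hv
    have hFpos : 0 < F.card := Finset.card_pos.2 ⟨v, hv⟩
    omega

lemma agree_coneCh_downCh {K : Finset (Finset (Fin n))} (hK : IsComplex K) (v : Fin n) (j : ℕ)
    (c : chain k K (j+1)) {F : Finset (Fin n)} (hv : v ∈ F) :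
    ext k K (j+1) (coneCh k K v j (downCh k K v j c)) F = ext k K (j+1) c F := by
  rw [ext_coneCh]
  by_cases hF : F ∈ K ∧ F.card = j + 1
  · rw [if_pos ⟨hv, hF⟩, ext_downCh k hK v j c hv, sq_sign]
  · rw [if_neg (fun hh => hF hh.2), ext_eq_zero k _ hF]

lemma bdry_congr_at {K : Finset (Finset (Fin n))} {j : ℕ} {c₁ c₂ : chain k K j}
    (G : Finset (Fin n))
    (h : ∀ u, u ∉ G → ext k K j c₁ (insert u G) = ext k K j c₂ (insert u G)) :
    bdry k K j c₁ G = bdry k K j c₂ G := by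
  rw [bdry_eq, bdry_eq]
  refine Finset.sum_congr rfl fun u _ => ?_
  by_cases hu : u ∉ G
  · rw [if_pos hu, if_pos hu, h u hu]
  · rw [if_neg hu, if_neg hu]

lemma bdry_downCh_zero {K : Finset (Finset (Fin n))} (hK : IsComplex K) (v : Fin n) (j : ℕ)
    (c : chain k K (j+1)) (hc : bdry k K (j+1) c = 0) :
    bdry k (link K {v}) j (downCh k K v j c) = 0 := by
  funext H
  by_cases hv : v ∈ H
  · rw [bdry_eq]
    refine Finset.sum_eq_zero fun u _ => ?_
    by_cases hu : u ∉ H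
    · rw [if_pos hu, ext_link_zero k _ (Finset.mem_insert_of_mem hv), mul_zero]
    · rw [if_neg hu]
  · have h1 : bdry k K (j+1) (coneCh k K v j (downCh k K v j c)) (insert v H) =
        bdry k K (j+1) c (insert v H) := by
      refine bdry_congr_at k _ fun u hu => ?_
      exact agree_coneCh_downCh k hK v j c (Finset.mem_insert_of_mem (Finset.mem_insert_self v H))
    rw [bdry_coneCh k hK v j _ (insert v H), if_pos (Finset.mem_insert_self v H),
      Finset.erase_insert hv, hc] at h1
    have h2 : ((-1 : k) ^ ((insert v H).filter fun w => w < v).card) ≠ 0 :=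
      pow_ne_zero _ (neg_ne_zero.2 one_ne_zero)
    have := h1
    simp only [Pi.zero_apply] at this
    rcases mul_eq_zero.1 this with h | h
    · exact absurd (neg_eq_zero.1 h) h2
    · exact h

end Cone


section DD

variable {n : ℕ} (k : Type) [Field k]

lemma ext_restrict_bdry {K : Finset (Finset (Fin n))} (hK : IsComplex K) {j : ℕ}
    (b : chain k K (j+1)) :
    ext k K j (fun F => bdry k K (j+1) b F.1) = bdry k K (j+1) b := by
  funext H
  by_cases h : H ∈ K ∧ H.card = j
  · rw [ext_eq k _ h]
  · rw [ext_eq_zero k _ h]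
    exact (bdry_eq_zero_of k hK b H (fun hh => h ⟨hh.1, by omega⟩)).symm

/-- `∂ ∘ ∂ = 0`. -/
lemma bdry_bdry {K : Finset (Finset (Fin n))} (hK : IsComplex K) (j : ℕ)
    (b : chain k K (j+1)) :
    bdry k K j (fun F => bdry k K (j+1) b F.1) = 0 := by
  classical
  funext G
  rw [bdry_eq]
  have hrw : ∀ v : Fin n, v ∉ G →
      ext k K j (fun F => bdry k K (j+1) b F.1) (insert v G) = bdry k K (j+1) b (insert v G) := by
    intro v _
    rw [ext_restrict_bdry k hK b]
  set f : Fin n → Fin n → k := fun v w =>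
    if v ∉ G ∧ w ∉ insert v G then
      (-1 : k) ^ (G.filter fun x => x < v).card *
        ((-1 : k) ^ ((insert v G).filter fun x => x < w).card *
          ext k K (j+1) b (insert w (insert v G)))
    else 0 with hf
  have hterm : ∀ v : Fin n, (if v ∉ G then
      (-1 : k) ^ (G.filter fun w => w < v).card *
        ext k K j (fun F => bdry k K (j+1) b F.1) (insert v G) else 0) = ∑ w : Fin n, f v w := by
    intro v
    by_cases hv : v ∉ G
    · rw [if_pos hv, hrw v hv, bdry_eq, Finset.mul_sum]
      refine Finset.sum_congr rfl fun w _ => ?_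
      by_cases hw : w ∉ insert v G
      · rw [if_pos hw, hf]
        simp only [hv, hw, and_self, if_pos, not_false_iff]
      · rw [if_neg hw, mul_zero, hf]
        simp only [hw, and_false, if_neg, not_true_eq_false]
        simp [hw]
    · rw [if_neg hv]
      symm
      refine Finset.sum_eq_zero fun w _ => ?_
      rw [hf]
      simp [hv]
  rw [Finset.sum_congr rfl (fun v _ => hterm v), ← Finset.sum_product' (f := f)]
  show (∑ p ∈ Finset.univ ×ˢ Finset.univ, f p.1 p.2) = 0
  refine Finset.sum_involution (fun p _ => (p.2, p.1)) ?_ ?_ (fun p hp => Finset.mem_product.2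
    ⟨Finset.mem_univ _, Finset.mem_univ _⟩) (fun p hp => rfl)
  · rintro ⟨v, w⟩ -
    dsimp only
    by_cases hvw : v ∉ G ∧ w ∉ insert v G
    · have hv : v ∉ G := hvw.1
      have hw : w ∉ G := fun hm => hvw.2 (Finset.mem_insert_of_mem hm)
      have hne : w ≠ v := fun e => hvw.2 (e ▸ Finset.mem_insert_self v G)
      have hwv : w ∉ G ∧ v ∉ insert w G := by
        refine ⟨hw, ?_⟩
        intro hm
        rcases Finset.mem_insert.1 hm with h | h
        · exact hne h.symm
        · exact hv h
      simp only [hf, hvw, hwv, and_self, if_pos, not_false_iff]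
      have hcomm : insert v (insert w G) = insert w (insert v G) := Finset.insert_comm v w G
      rw [hcomm, filter_insert_card hv w, filter_insert_card hw v]
      rcases lt_or_gt_of_ne hne with h | h
      · rw [if_pos h, if_neg (asymm h), add_zero, pow_add, pow_one]
        ring
      · rw [if_neg (asymm h), if_pos h, add_zero, pow_add, pow_one]
        ring
    · have hwv : ¬(w ∉ G ∧ v ∉ insert w G) := by
        rintro ⟨hw, hv'⟩
        refine hvw ⟨fun hm => hv' (Finset.mem_insert_of_mem hm), ?_⟩
        intro hm
        rcases Finset.mem_insert.1 hm with h | h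
        · exact hv' (h ▸ Finset.mem_insert_self w G)
        · exact hw h
      simp only [hf, hvw, hwv, if_neg, not_false_iff]
      simp
  · rintro ⟨v, w⟩ - hne
    intro heq
    have hwv : w = v := congrArg Prod.fst heq
    subst hwv
    apply hne
    simp [hf]

end DD


section Facets

variable {n : ℕ}

lemma exists_card_sup {K : Finset (Finset (Fin n))} (hne : K.Nonempty) :
    ∃ M ∈ K, M.card = K.sup (fun F => F.card) := by
  obtain ⟨M, hM, hsup⟩ := Finset.exists_mem_eq_sup K hne (fun F => F.card)
  exact ⟨M, hM, hsup.symm⟩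

lemma extend_to_sup {K : Finset (Finset (Fin n))} (hA : Aug K)
    {F : Finset (Fin n)} (hF : F ∈ K) :
    ∃ M ∈ K, F ⊆ M ∧ M.card = K.sup (fun G => G.card) := by
  have key : ∀ m : ℕ, ∀ F, F ∈ K → K.sup (fun G => G.card) - F.card ≤ m →
      ∃ M ∈ K, F ⊆ M ∧ M.card = K.sup (fun G => G.card) := by
    intro m
    induction m with
    | zero =>
      intro F hF hm
      have h1 : F.card ≤ K.sup (fun G => G.card) :=
        Finset.le_sup (f := fun G : Finset (Fin n) => G.card) hF
      exact ⟨F, hF, Finset.Subset.refl F, by omega⟩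
    | succ m ih =>
      intro F hF hm
      by_cases hcard : F.card = K.sup (fun G => G.card)
      · exact ⟨F, hF, Finset.Subset.refl F, hcard⟩
      · have h1 : F.card ≤ K.sup (fun G => G.card) :=
          Finset.le_sup (f := fun G : Finset (Fin n) => G.card) hF
        obtain ⟨M0, hM0, hM0c⟩ := exists_card_sup ⟨F, hF⟩
        obtain ⟨x, hxM, hxF, hx⟩ := hA F hF M0 hM0 (by omega)
        obtain ⟨M, hM, hsub, hc⟩ := ih (insert x F) hx (by
          rw [Finset.card_insert_of_notMem hxF]; omega)
        exact ⟨M, hM, (Finset.subset_insert x F).trans hsub, hc⟩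
  exact key (K.sup (fun G => G.card)) F hF (by omega)

lemma exists_max_not_mem {K : Finset (Finset (Fin n))} (hK : IsComplex K) (hA : Aug K)
    {v : Fin n} (hv : ¬ ∀ F ∈ K, insert v F ∈ K) :
    ∃ M ∈ K, M.card = K.sup (fun G => G.card) ∧ v ∉ M := by
  by_contra hall
  push_neg at hall
  apply hv
  intro F hF
  obtain ⟨M, hM, hsub, hc⟩ := extend_to_sup hA hF
  exact hK.2 M hM _ (Finset.insert_subset (hall M hM hc) hsub)

lemma sup_link {K : Finset (Finset (Fin n))} (hK : IsComplex K) (hA : Aug K)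
    {F : Finset (Fin n)} (hF : F ∈ K) :
    (link K F).sup (fun G => G.card) + F.card = K.sup (fun G => G.card) := by
  have hFle : F.card ≤ K.sup (fun G => G.card) :=
    Finset.le_sup (f := fun G : Finset (Fin n) => G.card) hF
  obtain ⟨M, hM, hsub, hc⟩ := extend_to_sup hA hF
  have hmem : M \ F ∈ link K F := by
    refine mem_link.2 ⟨hK.2 M hM _ (Finset.sdiff_subset), Finset.inter_sdiff_self F M, ?_⟩
    rwa [Finset.union_sdiff_of_subset hsub]
  have hge : M.card - F.card ≤ (link K F).sup (fun G => G.card) := by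
    have h2 : (M \ F).card ≤ (link K F).sup (fun G => G.card) :=
      Finset.le_sup (f := fun G : Finset (Fin n) => G.card) hmem
    rwa [Finset.card_sdiff_of_subset hsub] at h2
  obtain ⟨G0, hG0, hG0c⟩ := exists_card_sup (K := link K F) ⟨∅, (isComplex_link hK hF).1⟩
  obtain ⟨hG1, hG2, hG3⟩ := mem_link.1 hG0
  have hle : G0.card + F.card ≤ K.sup (fun G => G.card) := by
    have h1 : (F ∪ G0).card ≤ K.sup (fun G => G.card) :=
      Finset.le_sup (f := fun G : Finset (Fin n) => G.card) hG3
    have h2 : (F ∪ G0).card = F.card + G0.card :=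
      Finset.card_union_of_disjoint (Finset.disjoint_iff_inter_eq_empty.2 hG2)
    omega
  omega

end Facets

section Acyclic

variable {n : ℕ} (k : Type) [Field k]

/-- The main vanishing theorem: a complex with the augmentation property has
vanishing reduced homology below its dimension. -/
theorem acyclic (K : Finset (Finset (Fin n))) :
    IsComplex K → Aug K → ∀ j : ℕ, j + 1 ≤ K.sup (fun F => F.card) →
      ∀ c : chain k K j, bdry k K j c = 0 →
        ∃ b : chain k K (j+1), bdry k K (j+1) b = ext k K j c := by
  induction K using Finset.strongInduction with
  | _ K ih =>
  intro hK hA j hj c hc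
  have hKne : K.Nonempty := ⟨∅, hK.1⟩
  -- find a vertex
  obtain ⟨M, hM, hMc⟩ := exists_card_sup hKne
  have hMne : M.Nonempty := Finset.card_pos.1 (by omega)
  obtain ⟨u, hu⟩ := hMne
  have huK : {u} ∈ K := hK.2 M hM {u} (Finset.singleton_subset_iff.2 hu)
  revert hc
  revert c
  revert hj
  rcases j with _ | j'
  all_goals intro hj c hc
  ·
    refine ⟨fun F => if F.1 = {u} then c ⟨∅, ⟨hK.1, Finset.card_empty⟩⟩ else 0, ?_⟩
    funext G
    rw [bdry_eq]
    by_cases hG : G = ∅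
    · subst hG
      rw [Fintype.sum_eq_single u ?_]
      · rw [if_pos (Finset.notMem_empty u)]
        have hgate : insert u ∅ ∈ K ∧ (insert u (∅ : Finset (Fin n))).card = 1 := by
          constructor
          · simpa using huK
          · simp
        rw [ext_eq k _ hgate]
        have : ext k K 0 c ∅ = c ⟨∅, ⟨hK.1, Finset.card_empty⟩⟩ :=
          ext_eq k c ⟨hK.1, Finset.card_empty⟩
        rw [this]
        simp
      · intro w hw
        rw [if_pos (Finset.notMem_empty w)]
        by_cases hgate : insert w ∅ ∈ K ∧ (insert w (∅ : Finset (Fin n))).card = 1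
        · rw [ext_eq k _ hgate]
          have : (insert w ∅ : Finset (Fin n)) ≠ {u} := by
            intro h
            apply hw
            have : w ∈ ({u} : Finset (Fin n)) := h ▸ Finset.mem_insert_self w ∅
            simpa using this
          simp only [this, if_neg, mul_zero]
          simp [this]
        · rw [ext_eq_zero k _ hgate, mul_zero]
    · have hrhs : ext k K 0 c G = 0 := ext_eq_zero k c (by
        rintro ⟨-, hcard⟩
        exact hG (Finset.card_eq_zero.1 hcard))
      rw [hrhs]
      refine Finset.sum_eq_zero fun w _ => ?_
      by_cases hw : w ∉ G
      · rw [if_pos hw]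
        have hgate : ¬(insert w G ∈ K ∧ (insert w G).card = 0 + 1) := by
          rintro ⟨-, hcard⟩
          rw [Finset.card_insert_of_notMem hw] at hcard
          exact hG (Finset.card_eq_zero.1 (by omega))
        rw [ext_eq_zero k _ hgate, mul_zero]
      · rw [if_neg hw]
  ·     -- the link of u
    have hLC : IsComplex (link K {u}) := isComplex_link hK huK
    have hLA : Aug (link K {u}) := aug_link hK hA {u}
    have hLsub : link K {u} ⊂ K := by
      refine Finset.ssubset_iff_of_subset (Finset.filter_subset _ K) |>.2 ⟨{u}, huK, ?_⟩
      intro hmem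
      exact (mem_linkv.1 hmem).2.1 (Finset.mem_singleton_self u)
    have hsupL : (link K {u}).sup (fun G => G.card) + 1 = K.sup (fun G => G.card) := by
      have := sup_link hK hA huK
      simpa using this
    -- β is a cycle on the link
    have hβ : bdry k (link K {u}) j' (downCh k K u j' c) = 0 :=
      bdry_downCh_zero k hK u j' c hc
    -- fill it in the link by induction
    obtain ⟨γ, hγ⟩ := ih (link K {u}) hLsub hLC hLA j' (by omega) (downCh k K u j' c) hβ
    set b₁ : chain k K ((j' + 1)+1) := coneCh k K u (j' + 1) γ with hb₁
    -- the corrected cycle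
    set c'' : chain k K (j' + 1) := fun F => c F + bdry k K ((j' + 1)+1) b₁ F.1 with hc''
    have hvanish : ∀ H : Finset (Fin n), H ∈ K → H.card = (j' + 1) → u ∈ H →
        ext k K (j' + 1) c'' H = 0 := by
      intro H hHK hHc huH
      have h1 : ext k K (j' + 1) c'' H = c ⟨H, ⟨hHK, hHc⟩⟩ + bdry k K ((j' + 1)+1) b₁ H :=
        ext_eq k c'' ⟨hHK, hHc⟩
      rw [h1, hb₁, bdry_coneCh k hK u (j' + 1) γ H, if_pos huH, hγ]
      have h2 : ext k (link K {u}) j' (downCh k K u j' c) (H.erase u) =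
          (-1 : k) ^ (H.filter fun w => w < u).card * ext k K (j' + 1) c H :=
        ext_downCh k hK u j' c huH
      rw [h2, ext_eq k c ⟨hHK, hHc⟩, neg_mul, sq_sign]
      ring
    have hextc'' : ext k K (j' + 1) c'' = fun H => ext k K (j' + 1) c H + bdry k K ((j' + 1)+1) b₁ H := by
      funext H
      by_cases h : H ∈ K ∧ H.card = (j' + 1)
      · rw [ext_eq k _ h, ext_eq k _ h]
      · rw [ext_eq_zero k _ h, ext_eq_zero k _ h,
          bdry_eq_zero_of k hK b₁ H (fun hh => h ⟨hh.1, by omega⟩)]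
        ring
    have hcyc'' : bdry k K (j' + 1) c'' = 0 := by
      funext G
      have h1 := bdry_add k c (fun F => bdry k K ((j' + 1)+1) b₁ F.1) G
      have h2 := congrFun (bdry_bdry k hK (j' + 1) b₁) G
      have h3 := congrFun hc G
      simp only [Pi.zero_apply] at h2 h3 ⊢
      rw [hc'', h1, h2, h3, add_zero]
    by_cases hcone : ∀ F ∈ K, insert u F ∈ K
    · -- cone case : direct homotopy
      set δ : chain k (link K {u}) (j' + 1) := fun G => ext k K (j' + 1) c G.1 with hδ
      have hgatesame : ∀ H : Finset (Fin n), u ∉ H →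
          ext k (link K {u}) (j' + 1) δ H = ext k K (j' + 1) c H := by
        intro H huH
        by_cases h : H ∈ link K {u} ∧ H.card = (j' + 1)
        · rw [ext_eq k _ h, hδ]
        · have h2 : ¬(H ∈ K ∧ H.card = (j' + 1)) := by
            rintro ⟨hHK, hHc⟩
            exact h ⟨mem_linkv.2 ⟨hHK, huH, hcone H hHK⟩, hHc⟩
          rw [ext_eq_zero k _ h, ext_eq_zero k _ h2]
      refine ⟨coneCh k K u (j' + 1) δ, ?_⟩
      funext G
      rw [bdry_coneCh k hK u (j' + 1) δ G]
      by_cases hvG : u ∈ G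
      · rw [if_pos hvG]
        -- compute the boundary of δ on G.erase u from hc
        have hbc : bdry k K (j' + 1) c (G.erase u) = 0 := by
          have := congrFun hc (G.erase u)
          simpa using this
        rw [bdry_eq] at hbc
        have hsplit : bdry k (link K {u}) (j' + 1) δ (G.erase u) =
            (∑ w : Fin n, if w ∉ G.erase u then
              (-1 : k) ^ ((G.erase u).filter fun x => x < w).card *
                ext k K (j' + 1) c (insert w (G.erase u)) else 0)
            - (-1 : k) ^ ((G.erase u).filter fun x => x < u).card * ext k K (j' + 1) c G := by
          rw [bdry_eq]
          rw [← Finset.sum_erase_add _ _ (Finset.mem_univ u),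
              ← Finset.sum_erase_add _ _ (Finset.mem_univ u)]
          have hterm_u_L : (if u ∉ G.erase u then
              (-1 : k) ^ ((G.erase u).filter fun x => x < u).card *
                ext k (link K {u}) (j' + 1) δ (insert u (G.erase u)) else 0) = 0 := by
            rw [if_pos (Finset.notMem_erase u G),
              ext_link_zero k δ (Finset.mem_insert_self u _), mul_zero]
          have hterm_u_K : (if u ∉ G.erase u then
              (-1 : k) ^ ((G.erase u).filter fun x => x < u).card *
                ext k K (j' + 1) c (insert u (G.erase u)) else 0) =
              (-1 : k) ^ ((G.erase u).filter fun x => x < u).card * ext k K (j' + 1) c G := by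
            rw [if_pos (Finset.notMem_erase u G), Finset.insert_erase hvG]
          rw [hterm_u_L, hterm_u_K, add_zero]
          have hsum_eq : ∀ w ∈ Finset.univ.erase u,
              (if w ∉ G.erase u then
                (-1 : k) ^ ((G.erase u).filter fun x => x < w).card *
                  ext k (link K {u}) (j' + 1) δ (insert w (G.erase u)) else 0) =
              (if w ∉ G.erase u then
                (-1 : k) ^ ((G.erase u).filter fun x => x < w).card *
                  ext k K (j' + 1) c (insert w (G.erase u)) else 0) := by
            intro w hw
            have hwu : w ≠ u := (Finset.mem_erase.1 hw).1
            by_cases hmem : w ∉ G.erase u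
            · rw [if_pos hmem, if_pos hmem, hgatesame (insert w (G.erase u)) (by
                intro hmem2
                rcases Finset.mem_insert.1 hmem2 with h | h
                · exact hwu h.symm
                · exact (Finset.notMem_erase u G) h)]
            · rw [if_neg hmem, if_neg hmem]
          rw [Finset.sum_congr rfl hsum_eq]
          ring
        rw [hsplit, hbc]
        have hfe : ((G.erase u).filter fun x => x < u) = G.filter fun x => x < u :=
          filter_self_erase G
        rw [hfe]
        have hsq := sq_sign k (Finset.filter (fun x => x < u) G).card (ext k K (j' + 1) c G)
        linear_combination hsq
      · rw [if_neg hvG]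
        exact hgatesame G hvG
    · -- non-cone case: pass to the deletion
      obtain ⟨M₀, hM₀, hM₀c, hM₀u⟩ := exists_max_not_mem hK hA hcone
      set D := induced K ({u} : Finset (Fin n))ᶜ with hD
      have hDK : ∀ F ∈ D, F ∈ K := fun F hF => (mem_induced.1 hF).1
      have hDmem : ∀ F : Finset (Fin n), F ∈ D ↔ F ∈ K ∧ u ∉ F := by
        intro F
        rw [hD, mem_induced]
        constructor
        · rintro ⟨h1, h2⟩
          refine ⟨h1, fun hm => ?_⟩
          have := h2 hm
          simp at this
        · rintro ⟨h1, h2⟩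
          refine ⟨h1, fun x hx => ?_⟩
          simp only [Finset.mem_compl, Finset.mem_singleton]
          rintro rfl
          exact h2 hx
      have hDC : IsComplex D := isComplex_induced hK _
      have hDA : Aug D := aug_induced hA _
      have hDsub : D ⊂ K := by
        refine Finset.ssubset_iff_of_subset (fun F hF => hDK F hF) |>.2 ⟨{u}, huK, ?_⟩
        intro hmem
        exact ((hDmem {u}).1 hmem).2 (Finset.mem_singleton_self u)
      have hsupD : D.sup (fun G => G.card) = K.sup (fun G => G.card) := by
        apply le_antisymm
        · exact Finset.sup_mono (fun F hF => hDK F hF)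
        · have hM₀D : M₀ ∈ D := (hDmem M₀).2 ⟨hM₀, hM₀u⟩
          have h3 : M₀.card ≤ D.sup (fun G => G.card) :=
            Finset.le_sup (f := fun G : Finset (Fin n) => G.card) hM₀D
          omega
      -- restrict c'' to D
      set cD : chain k D (j' + 1) := fun F => ext k K (j' + 1) c'' F.1 with hcD
      have hextD : ext k D (j' + 1) cD = ext k K (j' + 1) c'' := by
        funext H
        by_cases h : H ∈ D ∧ H.card = (j' + 1)
        · rw [ext_eq k _ h, hcD]
        · rw [ext_eq_zero k _ h]
          by_cases h2 : H ∈ K ∧ H.card = (j' + 1)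
          · have huH : u ∈ H := by
              by_contra huH
              exact h ⟨(hDmem H).2 ⟨h2.1, huH⟩, h2.2⟩
            exact (hvanish H h2.1 h2.2 huH).symm
          · rw [ext_eq_zero k _ h2]
      have hcycD : bdry k D (j' + 1) cD = 0 := by
        rw [bdry_ext_congr k hextD]
        exact hcyc''
      obtain ⟨bD, hbD⟩ := ih D hDsub hDC hDA (j' + 1) (by omega) cD hcycD
      set b₂ : chain k K ((j' + 1)+1) := fun F => ext k D ((j' + 1)+1) bD F.1 with hb₂
      have hbdryb₂ : bdry k K ((j' + 1)+1) b₂ = ext k K (j' + 1) c'' := by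
        rw [hb₂, bdry_ext_congr k (ext_lift k hDK bD), hbD, hextD]
      refine ⟨fun F => b₂ F - b₁ F, ?_⟩
      funext G
      rw [bdry_sub k b₂ b₁ G, congrFun hbdryb₂ G, congrFun hextc'' G]
      ring

end Acyclic


section TopCycle

variable {n : ℕ} (k : Type) [Field k]

lemma link_conefree {K : Finset (Finset (Fin n))} (hK : IsComplex K) (hA : Aug K)
    {u : Fin n} (huK : {u} ∈ K)
    (hcf : ¬∃ v : Fin n, ∀ F ∈ K, insert v F ∈ K) :
    ¬∃ w : Fin n, ∀ G ∈ link K {u}, insert w G ∈ link K {u} := by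
  rintro ⟨w, hw⟩
  have h0 : ∅ ∈ link K {u} := (isComplex_link hK huK).1
  have hwL : {w} ∈ link K {u} := by simpa using hw ∅ h0
  obtain ⟨hwK, hwu, hiwu⟩ := mem_linkv.1 hwL
  have hwne : w ≠ u := by
    intro e
    exact hwu (by simp [e])
  push_neg at hcf
  obtain ⟨F₂, hF₂K, hF₂⟩ := hcf w
  obtain ⟨B₂, hB₂, hB₂c, hB₂w⟩ := exists_max_not_mem hK hA
    (show ¬∀ F ∈ K, insert w F ∈ K from fun h => hF₂ (h F₂ hF₂K))
  obtain ⟨B₁, hB₁, hB₁sub, hB₁c⟩ := extend_to_sup hA hiwu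
  have hwB₁ : w ∈ B₁ := hB₁sub (Finset.mem_insert_of_mem (Finset.mem_singleton_self w))
  have huB₁ : u ∈ B₁ := hB₁sub (Finset.mem_insert_self u {w})
  have herase : B₁.erase w ∈ K := hK.2 _ hB₁ _ (Finset.erase_subset w B₁)
  have hNpos : 1 ≤ K.sup (fun G => G.card) := by
    have := Finset.card_pos.2 ⟨w, hwB₁⟩
    omega
  have hcard : (B₁.erase w).card < B₂.card := by
    rw [Finset.card_erase_of_mem hwB₁, hB₁c, hB₂c]
    omega
  obtain ⟨x, hxB₂, hxe, hxK⟩ := hA _ herase _ hB₂ hcard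
  have hxw : x ≠ w := fun e => hB₂w (e ▸ hxB₂)
  have huB₃ : u ∈ insert x (B₁.erase w) :=
    Finset.mem_insert_of_mem (Finset.mem_erase.2 ⟨fun e => hwne e.symm, huB₁⟩)
  have hwB₃ : w ∉ insert x (B₁.erase w) := by
    intro hm
    rcases Finset.mem_insert.1 hm with h | h
    · exact hxw h.symm
    · exact (Finset.notMem_erase w B₁) h
  have hB₃e : (insert x (B₁.erase w)).erase u ∈ link K {u} := by
    refine mem_linkv.2 ⟨hK.2 _ hxK _ (Finset.erase_subset u _), Finset.notMem_erase u _, ?_⟩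
    rwa [Finset.insert_erase huB₃]
  have hcone := hw _ hB₃e
  obtain ⟨h1, h2, h3⟩ := mem_linkv.1 hcone
  -- cardinality contradiction
  have hwB₃e : w ∉ (insert x (B₁.erase w)).erase u := fun hm => hwB₃ (Finset.mem_of_mem_erase hm)
  have hcard3 : (insert x (B₁.erase w)).card = K.sup (fun G => G.card) := by
    rw [Finset.card_insert_of_notMem hxe, Finset.card_erase_of_mem hwB₁, hB₁c]
    omega
  have hce : ((insert x (B₁.erase w)).erase u).card = K.sup (fun G => G.card) - 1 := by
    rw [Finset.card_erase_of_mem huB₃, hcard3]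
  have hc1 : (insert w ((insert x (B₁.erase w)).erase u)).card =
      K.sup (fun G => G.card) - 1 + 1 := by
    rw [Finset.card_insert_of_notMem hwB₃e, hce]
  have hc2 : (insert u (insert w ((insert x (B₁.erase w)).erase u))).card =
      K.sup (fun G => G.card) - 1 + 2 := by
    rw [Finset.card_insert_of_notMem h2, hc1]
  have hle : (insert u (insert w ((insert x (B₁.erase w)).erase u))).card ≤
      K.sup (fun G => G.card) :=
    Finset.le_sup (f := fun G : Finset (Fin n) => G.card) h3
  omega

/-- A cone-free complex with the augmentation property has a nonzero top cycle. -/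
theorem topcycle (K : Finset (Finset (Fin n))) :
    IsComplex K → Aug K → (¬∃ v : Fin n, ∀ F ∈ K, insert v F ∈ K) →
      ∃ c : chain k K (K.sup fun F => F.card),
        bdry k K (K.sup fun F => F.card) c = 0 ∧ ∃ F, c F ≠ 0 := by
  induction K using Finset.strongInduction with
  | _ K ih =>
  intro hK hA hcf
  by_cases hN : K.sup (fun F => F.card) = 0
  · rw [hN]
    refine ⟨fun _ => 1, ?_, ⟨⟨∅, hK.1, rfl⟩, one_ne_zero⟩⟩
    funext G
    rw [bdry_eq]
    refine Finset.sum_eq_zero fun w _ => ?_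
    by_cases hw : w ∉ G
    · rw [if_pos hw]
      have hgate : ¬(insert w G ∈ K ∧ (insert w G).card = 0) := by
        rintro ⟨-, hcard⟩
        rw [Finset.card_insert_of_notMem hw] at hcard
        omega
      rw [ext_eq_zero k _ hgate, mul_zero]
    · rw [if_neg hw]
  · obtain ⟨M, hM, hMc⟩ := exists_card_sup (K := K) ⟨∅, hK.1⟩
    have hMne : M.Nonempty := Finset.card_pos.1 (by omega)
    obtain ⟨u, hu⟩ := hMne
    have huK : {u} ∈ K := hK.2 M hM {u} (Finset.singleton_subset_iff.2 hu)
    have hucone : ¬∀ F ∈ K, insert u F ∈ K := fun h => hcf ⟨u, h⟩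
    have hLC : IsComplex (link K {u}) := isComplex_link hK huK
    have hLA : Aug (link K {u}) := aug_link hK hA {u}
    have hLsub : link K {u} ⊂ K := by
      refine Finset.ssubset_iff_of_subset (Finset.filter_subset _ K) |>.2 ⟨{u}, huK, ?_⟩
      intro hmem
      exact (mem_linkv.1 hmem).2.1 (Finset.mem_singleton_self u)
    have hsupL : (link K {u}).sup (fun G => G.card) + 1 = K.sup (fun G => G.card) := by
      have := sup_link hK hA huK
      simpa using this
    have hLcf := link_conefree hK hA huK hcf
    obtain ⟨ζ, hζ, F₀, hF₀⟩ := ih (link K {u}) hLsub hLC hLA hLcf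
    obtain ⟨M₀, hM₀, hM₀c, hM₀u⟩ := exists_max_not_mem hK hA hucone
    have hDK : ∀ F ∈ induced K ({u} : Finset (Fin n))ᶜ, F ∈ K :=
      fun F hF => (mem_induced.1 hF).1
    have hDmem : ∀ F : Finset (Fin n),
        F ∈ induced K ({u} : Finset (Fin n))ᶜ ↔ F ∈ K ∧ u ∉ F := by
      intro F
      rw [mem_induced]
      constructor
      · rintro ⟨h1, h2⟩
        refine ⟨h1, fun hm => ?_⟩
        have := h2 hm
        simp at this
      · rintro ⟨h1, h2⟩
        refine ⟨h1, fun x hx => ?_⟩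
        simp only [Finset.mem_compl, Finset.mem_singleton]
        rintro rfl
        exact h2 hx
    have hDC : IsComplex (induced K ({u} : Finset (Fin n))ᶜ) := isComplex_induced hK _
    have hDA : Aug (induced K ({u} : Finset (Fin n))ᶜ) := aug_induced hA _
    have hsupD : (induced K ({u} : Finset (Fin n))ᶜ).sup (fun G => G.card) =
        K.sup (fun G => G.card) := by
      apply le_antisymm
      · exact Finset.sup_mono (fun F hF => hDK F hF)
      · have hM₀D : M₀ ∈ induced K ({u} : Finset (Fin n))ᶜ := (hDmem M₀).2 ⟨hM₀, hM₀u⟩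
        have h3 : M₀.card ≤ (induced K ({u} : Finset (Fin n))ᶜ).sup (fun G => G.card) :=
          Finset.le_sup (f := fun G : Finset (Fin n) => G.card) hM₀D
        omega
    have hLD : ∀ G ∈ link K {u}, G ∈ induced K ({u} : Finset (Fin n))ᶜ := by
      intro G hG
      obtain ⟨h1, h2, h3⟩ := mem_linkv.1 hG
      exact (hDmem G).2 ⟨h1, h2⟩
    have hζ'cyc : bdry k (induced K ({u} : Finset (Fin n))ᶜ) ((link K {u}).sup fun F => F.card)
        (fun F => ext k (link K {u}) ((link K {u}).sup fun F => F.card) ζ F.1) = 0 := by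
      rw [bdry_ext_congr k (ext_lift k hLD ζ)]
      exact hζ
    obtain ⟨wD, hwD⟩ := acyclic k (induced K ({u} : Finset (Fin n))ᶜ) hDC hDA ((link K {u}).sup fun F => F.card)
      (by omega) (fun F => ext k (link K {u}) ((link K {u}).sup fun F => F.card) ζ F.1) hζ'cyc
    rw [← hsupL]
    refine ⟨fun F => coneCh k K u ((link K {u}).sup fun F => F.card) ζ F - ext k (induced K ({u} : Finset (Fin n))ᶜ) (((link K {u}).sup fun F => F.card)+1) wD F.1,
      ?_, ?_⟩
    · funext G
      rw [bdry_sub k _ _ G]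
      have h1 : bdry k K (((link K {u}).sup fun F => F.card)+1) (coneCh k K u ((link K {u}).sup fun F => F.card) ζ) G = ext k (link K {u}) ((link K {u}).sup fun F => F.card) ζ G := by
        rw [bdry_coneCh k hK u ((link K {u}).sup fun F => F.card) ζ G]
        by_cases hvG : u ∈ G
        · rw [if_pos hvG, hζ, ext_link_zero k ζ hvG]
          simp
        · rw [if_neg hvG]
      have h2 : bdry k K (((link K {u}).sup fun F => F.card)+1)
          (fun F : {F // F ∈ K ∧ F.card = ((link K {u}).sup fun F => F.card)+1} =>
            ext k (induced K ({u} : Finset (Fin n))ᶜ) (((link K {u}).sup fun F => F.card)+1) wD F.1) G =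
          ext k (link K {u}) ((link K {u}).sup fun F => F.card) ζ G := by
        rw [bdry_ext_congr k (ext_lift k hDK wD), congrFun hwD G,
          congrFun (ext_lift k hLD ζ) G]
      rw [h1, h2]
      simp
    · have huF₀ : u ∉ F₀.1 := (mem_linkv.1 F₀.2.1).2.1
      have hmemK : insert u F₀.1 ∈ K := (mem_linkv.1 F₀.2.1).2.2
      have hcardK : (insert u F₀.1).card = ((link K {u}).sup fun F => F.card) + 1 := by
        rw [Finset.card_insert_of_notMem huF₀, F₀.2.2]
      refine ⟨⟨insert u F₀.1, hmemK, hcardK⟩, ?_⟩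
      have hv1 : coneCh k K u ((link K {u}).sup fun F => F.card) ζ ⟨insert u F₀.1, hmemK, hcardK⟩ =
          (-1 : k) ^ ((insert u F₀.1).filter fun w => w < u).card * ζ F₀ := by
        show (if u ∈ insert u F₀.1 then _ else 0) = _
        rw [if_pos (Finset.mem_insert_self u F₀.1), Finset.erase_insert huF₀,
          ext_eq k ζ F₀.2]
      have hv2 : ext k (induced K ({u} : Finset (Fin n))ᶜ) (((link K {u}).sup fun F => F.card)+1) wD (insert u F₀.1) = 0 := by
        refine ext_eq_zero k _ ?_
        rintro ⟨hm, -⟩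
        exact ((hDmem _).1 hm).2 (Finset.mem_insert_self u F₀.1)
      show coneCh k K u ((link K {u}).sup fun F => F.card) ζ ⟨insert u F₀.1, hmemK, hcardK⟩ -
        ext k (induced K ({u} : Finset (Fin n))ᶜ) (((link K {u}).sup fun F => F.card)+1) wD (insert u F₀.1) ≠ 0
      rw [hv1, hv2, sub_zero]
      exact mul_ne_zero (pow_ne_zero _ (by norm_num)) hF₀

end TopCycle


section Assembly

variable {n : ℕ}

lemma isCM_of_aug (k : Type) [Field k] {K : Finset (Finset (Fin n))}
    (hK : IsComplex K) (hA : Aug K) : IsCM k K := by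
  intro F hF i hi hnz
  obtain ⟨j, hj, c, hc, hall⟩ := hnz
  have hsup := sup_link hK hA hF
  have hFle : F.card ≤ K.sup (fun G => G.card) :=
    Finset.le_sup (f := fun G : Finset (Fin n) => G.card) hF
  have hjle : j + 1 ≤ (link K F).sup (fun G => G.card) := by
    rw [dimOf] at hi
    omega
  obtain ⟨b, hb⟩ := acyclic k (link K F) (isComplex_link hK hF) (aug_link hK hA F) j hjle c hc
  exact hall b hb

lemma union_coloops {K : Finset (Finset (Fin n))} (hK : IsComplex K) {A : Finset (Fin n)}
    (hA' : ∀ a ∈ A, ∀ F ∈ K, insert a F ∈ K) :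
    ∀ S ⊆ A, ∀ F ∈ K, F ∪ S ∈ K := by
  intro S
  induction S using Finset.induction_on with
  | empty =>
    intro _ F hF
    simpa using hF
  | @insert a S ha ihS =>
    intro hsub F hF
    have h1 : F ∪ S ∈ K := ihS ((Finset.subset_insert a S).trans hsub) F hF
    have h2 : insert a (F ∪ S) ∈ K := hA' a (hsub (Finset.mem_insert_self a S)) _ h1
    rwa [Finset.union_insert]

end Assembly

/-- Lemma 2.2: a matroid complex is Cohen–Macaulay over every field, is the
join of a simplex (on a vertex set `A`) with a 2-CM complex `Γ`, and is
either a cone (some vertex lies in every maximal face) or has nonvanishing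
top reduced homology. -/
theorem matroid_properties
    (n : ℕ) (K : Finset (Finset (Fin n)))
    (hK : IsComplex K) (hv : ∀ v : Fin n, {v} ∈ K)
    (hmat : ∀ W : Finset (Fin n), IsPure (induced K W)) :
    (∀ (k : Type) [Field k], IsCM k K) ∧
    (∀ (k : Type) [Field k],
      ∃ A : Finset (Fin n), ∃ Γ : Finset (Finset (Fin n)),
        IsComplex Γ ∧ (∀ G ∈ Γ, Disjoint G A) ∧ IsQCM k 2 Γ ∧
        ∀ F : Finset (Fin n), F ∈ K ↔ F \ A ∈ Γ) ∧
    (∀ (k : Type) [Field k],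
      (∃ v : Fin n, ∀ F ∈ K, (∀ G ∈ K, F ⊆ G → G = F) → v ∈ F) ∨
        homNonzero k K (dimOf K)) := by
  classical
  have hA : Aug K := aug_of_matroid hK hmat
  refine ⟨fun k _ => isCM_of_aug k hK hA, ?_, ?_⟩
  · intro k _
    refine ⟨Finset.univ.filter (fun v : Fin n => ∀ F ∈ K, insert v F ∈ K),
      induced K (Finset.univ.filter (fun v : Fin n => ∀ F ∈ K, insert v F ∈ K))ᶜ,
      isComplex_induced hK _, ?_, ?_, ?_⟩
    · intro G hG
      have hsub := (mem_induced.1 hG).2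
      rw [Finset.disjoint_left]
      intro a haG haA
      have h1 := hsub haG
      rw [Finset.mem_compl] at h1
      exact h1 haA
    · -- 2-CM
      have hAcone : ∀ a ∈ Finset.univ.filter (fun v : Fin n => ∀ F ∈ K, insert v F ∈ K),
          ∀ F ∈ K, insert a F ∈ K := fun a ha => (Finset.mem_filter.1 ha).2
      have hMfull : ∀ M ∈ K, M.card = K.sup (fun F => F.card) →
          (Finset.univ.filter (fun v : Fin n => ∀ F ∈ K, insert v F ∈ K)) ⊆ M := by
        intro M hM hMc a ha
        by_contra haM
        have h1 : insert a M ∈ K := hAcone a ha M hM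
        have h2 : (insert a M).card ≤ K.sup (fun F => F.card) :=
          Finset.le_sup (f := fun F : Finset (Fin n) => F.card) h1
        rw [Finset.card_insert_of_notMem haM] at h2
        omega
      obtain ⟨M, hM, hMc⟩ := exists_card_sup (K := K) ⟨∅, hK.1⟩
      have hsupG : (induced K (Finset.univ.filter
            (fun v : Fin n => ∀ F ∈ K, insert v F ∈ K))ᶜ).sup (fun F => F.card) +
          (Finset.univ.filter (fun v : Fin n => ∀ F ∈ K, insert v F ∈ K)).card =
          K.sup (fun F => F.card) := by
        have hup : ∀ G ∈ induced K (Finset.univ.filter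
            (fun v : Fin n => ∀ F ∈ K, insert v F ∈ K))ᶜ,
            G.card + (Finset.univ.filter (fun v : Fin n => ∀ F ∈ K, insert v F ∈ K)).card ≤
              K.sup (fun F => F.card) := by
          intro G hG
          obtain ⟨hGK, hGsub⟩ := mem_induced.1 hG
          have h1 : G ∪ (Finset.univ.filter (fun v : Fin n => ∀ F ∈ K, insert v F ∈ K)) ∈ K :=
            union_coloops hK hAcone _ (Finset.Subset.refl _) G hGK
          have hdisj : Disjoint G (Finset.univ.filter (fun v : Fin n => ∀ F ∈ K, insert v F ∈ K)) := by
            rw [Finset.disjoint_left]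
            intro a haG haA
            have h2 := hGsub haG
            rw [Finset.mem_compl] at h2
            exact h2 haA
          have h3 : (G ∪ (Finset.univ.filter (fun v : Fin n => ∀ F ∈ K, insert v F ∈ K))).card ≤
              K.sup (fun F => F.card) :=
            Finset.le_sup (f := fun F : Finset (Fin n) => F.card) h1
          rw [Finset.card_union_of_disjoint hdisj] at h3
          exact h3
        have hdown : M \ (Finset.univ.filter (fun v : Fin n => ∀ F ∈ K, insert v F ∈ K)) ∈
            induced K (Finset.univ.filter (fun v : Fin n => ∀ F ∈ K, insert v F ∈ K))ᶜ := by
          refine mem_induced.2 ⟨hK.2 M hM _ Finset.sdiff_subset, ?_⟩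
          intro x hx
          rw [Finset.mem_compl]
          exact (Finset.mem_sdiff.1 hx).2
        have hdc : (M \ (Finset.univ.filter (fun v : Fin n => ∀ F ∈ K, insert v F ∈ K))).card =
            K.sup (fun F => F.card) -
              (Finset.univ.filter (fun v : Fin n => ∀ F ∈ K, insert v F ∈ K)).card := by
          rw [Finset.card_sdiff_of_subset (hMfull M hM hMc), hMc]
        have h4 := Finset.le_sup (f := fun F : Finset (Fin n) => F.card) hdown
        have h5 : (Finset.univ.filter (fun v : Fin n => ∀ F ∈ K, insert v F ∈ K)).card ≤ M.card :=
          Finset.card_le_card (hMfull M hM hMc)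
        obtain ⟨G₀, hG₀, hG₀c⟩ := exists_card_sup
          (K := induced K (Finset.univ.filter (fun v : Fin n => ∀ F ∈ K, insert v F ∈ K))ᶜ)
          ⟨∅, (isComplex_induced hK _).1⟩
        have h6 := hup G₀ hG₀
        simp only [hdc] at h4
        omega
      intro U hU
      constructor
      · have h1 : induced (induced K (Finset.univ.filter
            (fun v : Fin n => ∀ F ∈ K, insert v F ∈ K))ᶜ) Uᶜ =
            induced K ((Finset.univ.filter (fun v : Fin n => ∀ F ∈ K, insert v F ∈ K))ᶜ ∩ Uᶜ) := by
          ext F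
          simp only [mem_induced, Finset.subset_inter_iff]
          tauto
        rw [h1]
        exact isCM_of_aug k (isComplex_induced hK _) (aug_induced hA _)
      · -- dimension preserved
        by_cases hUe : U = ∅
        · subst hUe
          rw [show (∅ : Finset (Fin n))ᶜ = Finset.univ from Finset.compl_empty]
          have h1 : induced (induced K (Finset.univ.filter
              (fun v : Fin n => ∀ F ∈ K, insert v F ∈ K))ᶜ) Finset.univ =
              induced K (Finset.univ.filter (fun v : Fin n => ∀ F ∈ K, insert v F ∈ K))ᶜ := by
            rw [induced]
            exact Finset.filter_true_of_mem (fun F _ => Finset.subset_univ F)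
          rw [h1]
        · obtain ⟨v, rfl⟩ := Finset.card_eq_one.1 (le_antisymm (by omega)
            (Finset.card_pos.2 (Finset.nonempty_iff_ne_empty.2 hUe)))
          by_cases hvG : ({v} : Finset (Fin n)) ∈ induced K (Finset.univ.filter
              (fun v : Fin n => ∀ F ∈ K, insert v F ∈ K))ᶜ
          · -- v is not a coloop; a maximal face avoiding v survives
            obtain ⟨hvK, hvsub⟩ := mem_induced.1 hvG
            have hvA : ¬∀ F ∈ K, insert v F ∈ K := by
              have h2 := hvsub (Finset.mem_singleton_self v)
              rw [Finset.mem_compl, Finset.mem_filter] at h2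
              intro hcon
              exact h2 ⟨Finset.mem_univ v, hcon⟩
            obtain ⟨M₀, hM₀, hM₀c, hM₀v⟩ := exists_max_not_mem hK hA hvA
            have hmem : M₀ \ (Finset.univ.filter (fun v : Fin n => ∀ F ∈ K, insert v F ∈ K)) ∈
                induced (induced K (Finset.univ.filter
                  (fun v : Fin n => ∀ F ∈ K, insert v F ∈ K))ᶜ) ({v} : Finset (Fin n))ᶜ := by
              refine mem_induced.2 ⟨mem_induced.2 ⟨hK.2 M₀ hM₀ _ Finset.sdiff_subset, ?_⟩, ?_⟩
              · intro x hx
                rw [Finset.mem_compl]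
                exact (Finset.mem_sdiff.1 hx).2
              · intro x hx
                rw [Finset.mem_compl, Finset.mem_singleton]
                rintro rfl
                exact hM₀v (Finset.mem_sdiff.1 hx).1
            have hdc : (M₀ \ (Finset.univ.filter (fun v : Fin n => ∀ F ∈ K, insert v F ∈ K))).card =
                K.sup (fun F => F.card) -
                  (Finset.univ.filter (fun v : Fin n => ∀ F ∈ K, insert v F ∈ K)).card := by
              rw [Finset.card_sdiff_of_subset (hMfull M₀ hM₀ hM₀c), hM₀c]
            have h4 := Finset.le_sup (f := fun F : Finset (Fin n) => F.card) hmem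
            have h5 : (induced (induced K (Finset.univ.filter
                (fun v : Fin n => ∀ F ∈ K, insert v F ∈ K))ᶜ) ({v} : Finset (Fin n))ᶜ).sup
                  (fun F => F.card) ≤
                (induced K (Finset.univ.filter
                  (fun v : Fin n => ∀ F ∈ K, insert v F ∈ K))ᶜ).sup (fun F => F.card) :=
              Finset.sup_mono (Finset.filter_subset _ _)
            have h6 : (Finset.univ.filter (fun v : Fin n => ∀ F ∈ K, insert v F ∈ K)).card ≤
                K.sup (fun F => F.card) := by
              have := Finset.card_le_card (hMfull M hM hMc)
              have h7 : M.card ≤ K.sup (fun F => F.card) :=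
                Finset.le_sup (f := fun F : Finset (Fin n) => F.card) hM
              omega
            rw [dimOf, dimOf]
            simp only [hdc] at h4
            omega
          · -- v is not even a vertex of Γ
            have h1 : induced (induced K (Finset.univ.filter
                (fun v : Fin n => ∀ F ∈ K, insert v F ∈ K))ᶜ) ({v} : Finset (Fin n))ᶜ =
                induced K (Finset.univ.filter (fun v : Fin n => ∀ F ∈ K, insert v F ∈ K))ᶜ := by
              rw [induced]
              refine Finset.filter_true_of_mem (fun F hF => ?_)
              intro x hx
              rw [Finset.mem_compl, Finset.mem_singleton]
              rintro rfl
              exact hvG ((isComplex_induced hK _).2 F hF {x} (Finset.singleton_subset_iff.2 hx))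
            rw [h1]
    · -- join decomposition
      intro F
      constructor
      · intro hF
        refine mem_induced.2 ⟨hK.2 F hF _ Finset.sdiff_subset, ?_⟩
        intro x hx
        rw [Finset.mem_compl]
        exact (Finset.mem_sdiff.1 hx).2
      · intro hF
        have h1 : F \ (Finset.univ.filter (fun v : Fin n => ∀ F ∈ K, insert v F ∈ K)) ∈ K :=
          (mem_induced.1 hF).1
        have h2 : (F \ (Finset.univ.filter (fun v : Fin n => ∀ F ∈ K, insert v F ∈ K))) ∪
            (F ∩ (Finset.univ.filter (fun v : Fin n => ∀ F ∈ K, insert v F ∈ K))) ∈ K :=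
          union_coloops hK (fun a ha => (Finset.mem_filter.1 ha).2) _
            Finset.inter_subset_right _ h1
        rwa [Finset.sdiff_union_inter] at h2
  · intro k _
    by_cases hcone : ∃ v : Fin n, ∀ F ∈ K, insert v F ∈ K
    · obtain ⟨v, hv'⟩ := hcone
      left
      refine ⟨v, fun F hF hmax => ?_⟩
      have h1 := hmax (insert v F) (hv' F hF) (Finset.subset_insert v F)
      rw [← h1]
      exact Finset.mem_insert_self v F
    · right
      obtain ⟨c, hc, F₀, hF₀⟩ := topcycle k K hK hA hcone
      refine ⟨K.sup (fun F => F.card), by rw [dimOf]; ring, c, hc, ?_⟩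
      intro b hb
      rw [bdry_top_zero k b] at hb
      have h1 := congrFun hb F₀.1
      rw [ext_eq k c F₀.2] at h1
      simp only [Pi.zero_apply] at h1
      exact hF₀ h1.symm

end MultConj
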